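/- arXiv:1504.02892 — 3 statements merged into one kernel-verified Lean document; each statement's English description precedes it below -/
import Mathlib

section
/- Let D be a positive integer and let (G_n) be a sequence of finite graphs with all degrees bounded by D and v(G_n) → ∞. Then (G_n) is left convergent if and only if for every positive integer l and every connected multigraph F with l labeled edges and no isolated vertices (F ∈ 𝓕_l), the limit lim_n i(F,G_n)/v(G_n) exists. -/
/-!
An injective map `φ` of the vertices of a labeled multigraph `F` sending every edge to an edge of
`G` is the same as a (not necessarily induced) copy in `G` of the simple graph `F'` underlying `F`.
Each edge sequence counted by `i(F, G)` comes from exactly `aut(F)` such maps, and sorting the maps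
by the graph `H ≥ F'` they induce gives `aut(F) · i(F, G) = ∑_{H ≥ F'} ind(H, G)`.
A graph containing a connected spanning subgraph is connected, so left convergence gives the limits
of `i(F, G n) / v(G n)`. Conversely every connected graph on at least two vertices is some `F'`, and
downward induction in the finite lattice of graphs on its vertex set isolates `ind(F', G n)`;
a single vertex has `ind = v(G n)`.
-/

open Filter Topology

/-- The maximum degree of `G` is at most `D`. -/
def DegLE {V : Type*} (G : SimpleGraph V) (D : ℕ) : Prop :=
  ∀ v, (G.neighborSet v).ncard ≤ D

/-- `ind F G`: the number of injective maps `V F → V G` that are isomorphisms of `F`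
with the induced subgraph of `G` on the image, i.e. the number of graph embeddings. -/
noncomputable def indCount {α β : Type*} (F : SimpleGraph α) (G : SimpleGraph β) : ℕ :=
  Nat.card (F ↪g G)

/-- Left convergence of a sequence of finite graphs: for every finite connected simple
graph `F`, the quantities `ind(F, G n) / v(G n)` converge. -/
def LeftConvergent (N : ℕ → ℕ) (G : ∀ n, SimpleGraph (Fin (N n))) : Prop :=
  ∀ (m : ℕ) (F : SimpleGraph (Fin m)), F.Connected →
    ∃ L : ℝ, Tendsto (fun n => (indCount F (G n) : ℝ) / (N n : ℝ)) atTop (nhds L)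

/-- `hom(G, H)` for a weighted graph `H` on `Fin k` with vertex weights `w` and
(unordered) pair weights `wE` (every pair, including loops, carries a weight). -/
noncomputable def homW {V : Type*} [Fintype V] (G : SimpleGraph V) {k : ℕ}
    (w : Fin k → ℝ) (wE : Sym2 (Fin k) → ℝ) : ℝ :=
  letI := Classical.decEq V
  letI := Classical.decRel G.Adj
  ∑ f : V → Fin k, (∏ v, w (f v)) * ∏ e ∈ G.edgeFinset, wE (Sym2.map f e)

/-- `t(G, H) = hom(G, H) / v(H) ^ v(G)`. -/
noncomputable def tW {V : Type*} [Fintype V] (G : SimpleGraph V) {k : ℕ}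
    (w : Fin k → ℝ) (wE : Sym2 (Fin k) → ℝ) : ℝ :=
  homW G w wE / (k : ℝ) ^ (Fintype.card V)

/-- `F : Fin l → Sym2 (Fin m)` represents a multigraph with `l` edges labeled by
`Fin l` on the vertex set `Fin m` (edge `p` has endpoint pair `F p`). `GoodMG F`
says that it is a member of `𝓕_l`: it has no isolated vertices, no loops, and is
connected. -/
def GoodMG {l m : ℕ} (F : Fin l → Sym2 (Fin m)) : Prop :=
  (∀ v : Fin m, ∃ p, v ∈ F p) ∧ (∀ p, ¬ (F p).IsDiag) ∧
    (SimpleGraph.fromEdgeSet (Set.range F)).Connected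

/-- `i(F, G)`: the number of sequences `(e 1, …, e l)` of edges of `G` whose induced
edge-labeled multigraph is isomorphic to the edge-labeled multigraph `F` (which has no
isolated vertices), i.e. such that some injection `φ` of the vertices of `F` into `G`
carries edge `p` of `F` to `e p` for every `p`. -/
noncomputable def iCount {l m : ℕ} (F : Fin l → Sym2 (Fin m)) {V : Type*}
    (G : SimpleGraph V) : ℕ :=
  Nat.card {e : Fin l → Sym2 V //
    (∀ p, e p ∈ G.edgeSet) ∧ ∃ φ : Fin m ↪ V, ∀ p, e p = Sym2.map φ (F p)}

theorem Nat.card_eq_card_mul_of_card_fiber {X Y : Type*} [Finite X] [Finite Y] (f : X → Y)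
    {k : ℕ} (hk : ∀ y, Nat.card {x // f x = y} = k) : Nat.card X = Nat.card Y * k := by
  have := Fintype.ofFinite Y
  rw [← Nat.card_congr (Equiv.sigmaFiberEquiv f), Nat.card_sigma]
  simp [hk, Nat.card_eq_fintype_card]

section LabeledMultigraph

variable {ι α V : Type*}

noncomputable def autCount (F : ι → Sym2 α) : ℕ :=
  Nat.card {σ : Equiv.Perm α // ∀ p, (F p).map σ = F p}

theorem autCount_pos [Finite α] (F : ι → Sym2 α) : 0 < autCount F :=
  have : Nonempty {σ : Equiv.Perm α // ∀ p, (F p).map σ = F p} := ⟨⟨1, fun p => by simp⟩⟩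
  Nat.card_pos

theorem exists_perm_comp_eq_of_map_eq [Finite α] {F : ι → Sym2 α} (hcov : ∀ v, ∃ p, v ∈ F p)
    {φ₀ φ : α ↪ V} (h : ∀ p, (F p).map φ = (F p).map φ₀) :
    ∃ σ : Equiv.Perm α, (∀ p, (F p).map σ = F p) ∧ φ₀ ∘ σ = φ := by
  have hrange : ∀ v, ∃ w, φ₀ w = φ v := fun v => by
    obtain ⟨p, hp⟩ := hcov v
    obtain ⟨w, -, hw⟩ := Sym2.mem_map.1 (h p ▸ Sym2.mem_map.2 ⟨v, hp, rfl⟩)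
    exact ⟨w, hw⟩
  choose ψ hψ using hrange
  have hψ_inj : Function.Injective ψ := fun a b hab => φ.injective (by rw [← hψ a, hab, hψ])
  set σ := Equiv.ofBijective ψ (Finite.injective_iff_bijective.1 hψ_inj)
  have hσ : φ₀ ∘ σ = φ := funext hψ
  refine ⟨σ, fun p => Sym2.map.injective φ₀.injective ?_, hσ⟩
  rw [Sym2.map_map, hσ, h p]

theorem iCount_mul_autCount {l m : ℕ} {F : Fin l → Sym2 (Fin m)} (hcov : ∀ v, ∃ p, v ∈ F p)
    [Finite V] (G : SimpleGraph V) :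
    iCount F G * autCount F = Nat.card {φ : Fin m ↪ V // ∀ p, (F p).map φ ∈ G.edgeSet} := by
  refine (Nat.card_eq_card_mul_of_card_fiber
    (fun φ => ⟨fun p => (F p).map φ.1, φ.2, φ.1, fun _ => rfl⟩) fun e => ?_).symm
  obtain ⟨φ₀, he⟩ := e.2.2
  have hmap : ∀ σ : {σ : Equiv.Perm (Fin m) // ∀ p, (F p).map σ = F p}, ∀ p,
      (F p).map (φ₀ ∘ σ.1) = e.1 p := fun σ p => by rw [← Sym2.map_map, σ.2 p, he p]
  symm
  refine Nat.card_eq_of_bijective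
    (fun σ => ⟨⟨σ.1.toEmbedding.trans φ₀, fun p => hmap σ p ▸ e.2.1 p⟩,
      Subtype.ext (funext (hmap σ))⟩) ⟨fun σ τ hστ => ?_, fun ⟨⟨φ, hφ⟩, hφe⟩ => ?_⟩
  · have := congrArg (fun φ => (φ.1.1 : Fin m → V)) hστ
    exact Subtype.ext (Equiv.ext fun v => φ₀.injective (congrFun this v))
  · have hφe' : ∀ p, (F p).map φ = (F p).map φ₀ := fun p => by
      rw [← he p]; exact congrFun (congrArg Subtype.val hφe) p
    obtain ⟨σ, hσF, hσ⟩ := exists_perm_comp_eq_of_map_eq hcov hφe'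
    exact ⟨⟨σ, hσF⟩, Subtype.ext (Subtype.ext (DFunLike.coe_injective hσ))⟩

end LabeledMultigraph

namespace SimpleGraph

variable {ι α V : Type*}

def copyEquivLeComap {F : SimpleGraph α} {G : SimpleGraph V} :
    Copy F G ≃ {f : α ↪ V // F ≤ G.comap f} where
  toFun f := ⟨f.toEmbedding, f.toHom.le_comap⟩
  invFun f := ⟨⟨f.1, (f.2 ·)⟩, f.1.injective⟩

def embeddingEquivComapEq {F : SimpleGraph α} {G : SimpleGraph V} :
    (F ↪g G) ≃ {f : α ↪ V // G.comap f = F} where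
  toFun e := ⟨e.toEmbedding, e.comap_eq⟩
  invFun f := ⟨f.1, by simp [← f.2]⟩

theorem labelledCopyCount_eq_card_le_comap [Fintype α] [Fintype V] (G : SimpleGraph V)
    (F : SimpleGraph α) : G.labelledCopyCount F = Nat.card {f : α ↪ V // F ≤ G.comap f} := by
  classical
  rw [labelledCopyCount, ← Nat.card_eq_fintype_card, Nat.card_congr copyEquivLeComap]

open scoped Classical in
theorem labelledCopyCount_eq_sum_indCount [Fintype α] [Fintype V] (G : SimpleGraph V)
    (F : SimpleGraph α) : G.labelledCopyCount F = ∑ H with F ≤ H, indCount H G := by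
  calc G.labelledCopyCount F = Nat.card {f : α ↪ V // F ≤ G.comap f} :=
        labelledCopyCount_eq_card_le_comap G F
    _ = Nat.card (Σ H : {H // F ≤ H}, {f : α ↪ V // G.comap f = H}) :=
        Nat.card_congr (Equiv.sigmaSubtypeFiberEquivSubtype (fun f : α ↪ V => G.comap f)
          fun _ => Iff.rfl).symm
    _ = ∑ H : {H // F ≤ H}, indCount H.1 G := by
        simp only [Nat.card_sigma, indCount, Nat.card_congr embeddingEquivComapEq]
    _ = ∑ H with F ≤ H, indCount H G :=
        (Finset.sum_subtype {H | F ≤ H} (fun _ => by simp) (indCount · G)).symm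

theorem fromEdgeSet_range_le_comap_iff {F : ι → Sym2 α} (hF : ∀ p, ¬(F p).IsDiag)
    (G : SimpleGraph V) (f : α → V) :
    fromEdgeSet (Set.range F) ≤ G.comap f ↔ ∀ p, (F p).map f ∈ G.edgeSet := by
  have hmem (e : Sym2 α) : e ∈ (G.comap f).edgeSet ↔ e.map f ∈ G.edgeSet :=
    e.ind fun _ _ => Iff.rfl
  simp only [fromEdgeSet_le, Set.subset_def, Set.mem_sdiff, Set.mem_range, Sym2.mem_diagSet,
    hmem]
  exact ⟨fun h p => h _ ⟨⟨p, rfl⟩, hF p⟩, fun h _ ⟨⟨p, hp⟩, _⟩ => hp ▸ h p⟩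

theorem labelledCopyCount_fromEdgeSet_range {l m : ℕ} {F : Fin l → Sym2 (Fin m)}
    (hcov : ∀ v, ∃ p, v ∈ F p) (hF : ∀ p, ¬(F p).IsDiag) [Fintype V] (G : SimpleGraph V) :
    G.labelledCopyCount (fromEdgeSet (Set.range F)) = iCount F G * autCount F := by
  rw [labelledCopyCount_eq_card_le_comap, iCount_mul_autCount hcov]
  simp only [fromEdgeSet_range_le_comap_iff hF]

open scoped Classical in
theorem labelledCopyCount_eq_indCount_add_sum [Fintype α] [Fintype V] (G : SimpleGraph V)
    (F : SimpleGraph α) :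
    G.labelledCopyCount F = indCount F G + ∑ H with F < H, indCount H G := by
  have : Finset.univ.filter (F ≤ ·) = insert F (Finset.univ.filter (F < ·)) := by
    ext H; simp [le_iff_eq_or_lt, eq_comm]
  rw [labelledCopyCount_eq_sum_indCount, this, Finset.sum_insert (by simp)]

theorem indCount_of_unique [Unique α] (F : SimpleGraph α) (G : SimpleGraph V) :
    indCount F G = Nat.card V :=
  Nat.card_congr
    { toFun f := f default
      invFun v := ⟨⟨fun _ => v, Function.injective_of_subsingleton _⟩, by simp⟩
      left_inv f := by ext a; simp [Unique.eq_default a]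
      right_inv v := rfl }

theorem Connected.exists_goodMG {m : ℕ} {F : SimpleGraph (Fin m)} (hF : F.Connected)
    (hm : 1 < m) : ∃ (l : ℕ) (Fl : Fin l → Sym2 (Fin m)), 0 < l ∧ GoodMG Fl ∧
      fromEdgeSet (Set.range Fl) = F := by
  have : Nontrivial (Fin m) := Fin.nontrivial_iff_two_le.2 hm
  obtain ⟨l, ⟨e⟩⟩ := Finite.exists_equiv_fin F.edgeSet
  have hrange : Set.range (Subtype.val ∘ e.symm) = F.edgeSet := by
    rw [EquivLike.range_comp, Subtype.range_coe]
  have hcov (v : Fin m) : ∃ p, v ∈ (Subtype.val ∘ e.symm) p := by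
    obtain ⟨w, hvw⟩ := hF.preconnected.exists_adj_of_nontrivial v
    obtain ⟨p, hp⟩ := hrange.symm.subset (F.mem_edgeSet.2 hvw)
    exact ⟨p, by rw [hp]; exact Sym2.mem_mk_left v w⟩
  have hfrom : fromEdgeSet (Set.range (Subtype.val ∘ e.symm)) = F := by
    rw [hrange, fromEdgeSet_edgeSet]
  exact ⟨l, _, (hcov ⟨0, by omega⟩).choose.pos,
    ⟨hcov, fun p => F.not_isDiag_of_mem_edgeSet (e.symm p).2, by rw [hfrom]; exact hF⟩, hfrom⟩

end SimpleGraph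

def DensityConverges (N : ℕ → ℕ) (c : ℕ → ℕ) : Prop :=
  ∃ L : ℝ, Tendsto (fun n => (c n : ℝ) / N n) atTop (𝓝 L)

namespace DensityConverges

variable {N : ℕ → ℕ}

theorem zero : DensityConverges N 0 := ⟨0, by simp⟩

theorem add {c d : ℕ → ℕ} (hc : DensityConverges N c) (hd : DensityConverges N d) :
    DensityConverges N (c + d) := by
  obtain ⟨L, hL⟩ := hc
  obtain ⟨M, hM⟩ := hd
  exact ⟨L + M, by simpa [add_div] using hL.add hM⟩

theorem sum {ι : Type*} {s : Finset ι} {c : ι → ℕ → ℕ}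
    (h : ∀ i ∈ s, DensityConverges N (c i)) : DensityConverges N fun n => ∑ i ∈ s, c i n := by
  convert Finset.sum_induction c (DensityConverges N) (fun _ _ => add) zero h using 1
  exact (funext fun n => Finset.sum_apply n s c).symm

theorem of_add {c d : ℕ → ℕ} (h : DensityConverges N fun n => c n + d n)
    (hd : DensityConverges N d) : DensityConverges N c := by
  obtain ⟨L, hL⟩ := h
  obtain ⟨M, hM⟩ := hd
  exact ⟨L - M, (hL.sub hM).congr fun n => by push_cast; ring⟩

theorem mul_const_iff {c : ℕ → ℕ} {k : ℕ} (hk : 0 < k) :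
    (DensityConverges N fun n => c n * k) ↔ DensityConverges N c := by
  have hk' : (k : ℝ) ≠ 0 := by positivity
  constructor
  · rintro ⟨L, hL⟩
    exact ⟨L / k, (hL.div_const k).congr fun n => by push_cast; field_simp⟩
  · rintro ⟨L, hL⟩
    exact ⟨L * k, (hL.mul_const (k : ℝ)).congr fun n => by push_cast; ring⟩

theorem self (hN : Tendsto N atTop atTop) : DensityConverges N N :=
  ⟨1, tendsto_const_nhds.congr' <| (hN.eventually_gt_atTop 0).mono fun n hn =>
    (div_self (by positivity)).symm⟩

end DensityConverges

section LeftConvergent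

open SimpleGraph

variable {N : ℕ → ℕ} {G : ∀ n, SimpleGraph (Fin (N n))}

theorem LeftConvergent.densityConverges_labelledCopyCount (h : LeftConvergent N G) {m : ℕ}
    {F : SimpleGraph (Fin m)} (hF : F.Connected) :
    DensityConverges N fun n => (G n).labelledCopyCount F := by
  classical
  simp only [labelledCopyCount_eq_sum_indCount]
  exact DensityConverges.sum fun H hH => h m H (hF.mono (Finset.mem_filter.1 hH).2)

theorem leftConvergent_of_densityConverges_labelledCopyCount (hN : Tendsto N atTop atTop)
    (h : ∀ m (F : SimpleGraph (Fin m)), F.Connected → 1 < m →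
      DensityConverges N fun n => (G n).labelledCopyCount F) :
    LeftConvergent N G := by
  intro m F hF
  change DensityConverges N fun n => indCount F (G n)
  rcases Nat.lt_or_ge 1 m with hm | hm
  · induction F using WellFoundedGT.induction with
    | _ F ih =>
    have hcopy := h m F hF hm
    simp only [labelledCopyCount_eq_indCount_add_sum] at hcopy
    classical
    exact hcopy.of_add <| .sum fun H hH =>
      ih H (Finset.mem_filter.1 hH).2 (hF.mono (Finset.mem_filter.1 hH).2.le)
  · obtain rfl : m = 1 := le_antisymm hm (Fin.pos_iff_nonempty.2 hF.nonempty)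
    simpa only [indCount_of_unique, Nat.card_fin] using DensityConverges.self hN

theorem densityConverges_iCount_iff {l m : ℕ} {F : Fin l → Sym2 (Fin m)}
    (hcov : ∀ v, ∃ p, v ∈ F p) (hF : ∀ p, ¬(F p).IsDiag) :
    (DensityConverges N fun n => iCount F (G n)) ↔
      DensityConverges N fun n => (G n).labelledCopyCount (fromEdgeSet (Set.range F)) := by
  simp only [labelledCopyCount_fromEdgeSet_range hcov hF]
  exact (DensityConverges.mul_const_iff (autCount_pos F)).symm

end LeftConvergent

theorem left_convergent_iff_iCount_converges_general
    (N : ℕ → ℕ) (G : ∀ n, SimpleGraph (Fin (N n)))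
    (hV : Tendsto N atTop atTop) :
    LeftConvergent N G ↔
      ∀ (l : ℕ), 0 < l → ∀ (m : ℕ) (F : Fin l → Sym2 (Fin m)), GoodMG F →
        ∃ L : ℝ, Tendsto (fun n => (iCount F (G n) : ℝ) / (N n : ℝ)) atTop (nhds L) := by
  constructor
  · intro h l _ m F hF
    exact (densityConverges_iCount_iff hF.1 hF.2.1).2 (h.densityConverges_labelledCopyCount hF.2.2)
  · intro h
    refine leftConvergent_of_densityConverges_labelledCopyCount hV fun m F hF hm => ?_
    obtain ⟨l, Fl, hl, hFl, rfl⟩ := hF.exists_goodMG hm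
    exact (densityConverges_iCount_iff hFl.1 hFl.2.1).1 (h l hl m Fl hFl)

/-- a sequence of graphs of maximum degree at most `D` with `v(G n) → ∞`
is left convergent iff for every `l > 0` and every connected edge-labeled multigraph
`F` with `l` edges and no isolated vertices (i.e. `F ∈ 𝓕_l`), the limit
`lim_n i(F, G n)/v(G n)` exists. -/
theorem left_convergent_iff_iCount_converges
    (D : ℕ) (hD : 0 < D) (N : ℕ → ℕ) (G : ∀ n, SimpleGraph (Fin (N n)))
    (hdeg : ∀ n, DegLE (G n) D) (hV : Tendsto N atTop atTop) :
    LeftConvergent N G ↔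
      ∀ (l : ℕ), 0 < l → ∀ (m : ℕ) (F : Fin l → Sym2 (Fin m)), GoodMG F →
        ∃ L : ℝ, Tendsto (fun n => (iCount F (G n) : ℝ) / (N n : ℝ)) atTop (nhds L) :=
  left_convergent_iff_iCount_converges_general N G hV
end

section
/- Let G be a finite graph, let k and l be positive integers, and let (i_1,j_1), …, (i_l,j_l) ∈ [k]² be pairs of colors forming the edge-labeled multigraph J on [k]. Then κ(v(G)·X_{i_1,j_1}, …, v(G)·X_{i_l,j_l}) = Σ_{F ∈ 𝓕_l} i(F,G) · κ(F,J), where for F ∈ 𝓕_l one sets κ(F,J) = Σ_π (|π|-1)! · (-1)^{|π|-1} · x(F_π, J), the sum over set partitions π of [l]; here F_π is the disjoint union over blocks B ∈ π of the subgraphs of F induced by the edges with labels in B (edges keeping their labels), and x(E,J) = E[∏_{p=1}^l Y_{i_p,j_p,f_p}] where f_1,…,f_l are the labeled edges of E and Y_{i,j,e} is the indicator that, in a uniformly random coloring of V(E) by [k], the two endpoints of e receive colors i and j. -/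
/-- For a coloring `C` of the vertices by `Fin k`, the number of edges of `G` between
color class `i` and color class `j`; this is `v(G) * X i j`. -/
noncomputable def eCount {V : Type*} [Fintype V] (G : SimpleGraph V) {k : ℕ}
    (C : V → Fin k) (i j : Fin k) : ℕ :=
  letI := Classical.decEq V
  letI := Classical.decRel G.Adj
  (G.edgeFinset.filter (fun e => Sym2.map C e = s(i, j))).card

/-- `P` is a set partition of `Fin l`. -/
def IsSetPartition {l : ℕ} (P : Finset (Finset (Fin l))) : Prop :=
  ∅ ∉ P ∧ ∀ i : Fin l, ∃ B ∈ P, i ∈ B ∧ ∀ B' ∈ P, i ∈ B' → B' = B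

/-- Expectation of `Z` over a uniformly random coloring of `V` with `k` colors. -/
noncomputable def colorExp {V : Type*} [Fintype V] (k : ℕ) (Z : (V → Fin k) → ℝ) : ℝ :=
  letI := Classical.decEq V
  (∑ C : V → Fin k, Z C) / (k : ℝ) ^ (Fintype.card V)

open Classical in
/-- The joint cumulant of the random variables `Z 1, …, Z l` defined on the space of
uniformly random colorings of `V` with `k` colors:
`κ(Z 1, …, Z l) = Σ_π (|π|-1)! (-1)^(|π|-1) Π_{B ∈ π} 𝔼[Π_{p ∈ B} Z p]`. -/
noncomputable def jointCumulantColor {V : Type*} [Fintype V] (k : ℕ) {l : ℕ}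
    (Z : Fin l → (V → Fin k) → ℝ) : ℝ :=
  ∑ P ∈ Finset.univ.filter (fun P : Finset (Finset (Fin l)) => IsSetPartition P),
    (-1 : ℝ) ^ (P.card - 1) * (Nat.factorial (P.card - 1) : ℝ) *
      ∏ B ∈ P, colorExp k (fun C => ∏ p ∈ B, Z p C)

/-- `x`-value of a block: for an edge-labeled multigraph `F` on `W`, a set `S` of edge
labels and target color pairs `ij`, this is the probability that a uniformly random
coloring `c : W → Fin k` colors the endpoints of the edge `F p` by the pair `ij p` for
every `p ∈ S`.  Taking `S` the label set of a component of a disjoint union, this is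
exactly the factor `x(component, J)`; taking `S = univ` it is `x(F, J)`. -/
noncomputable def xVal {W : Type*} [Fintype W] {l k : ℕ} (F : Fin l → Sym2 W)
    (S : Finset (Fin l)) (ij : Fin l → Sym2 (Fin k)) : ℝ :=
  (Nat.card {c : W → Fin k // ∀ p ∈ S, Sym2.map c (F p) = ij p} : ℝ) /
    (k : ℝ) ^ (Fintype.card W)

open Classical in
/-- `κ(F, J) = Σ_π (|π|-1)! (-1)^(|π|-1) x(F_π, J)` where
`x(F_π, J) = Π_{B ∈ π} x(F|_B, J)` is the `x`-value of the disjoint union `F_π` of the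
subgraphs of `F` spanned by the edges with labels in the blocks of `π`. -/
noncomputable def kappaFJ {l m k : ℕ} (F : Fin l → Sym2 (Fin m))
    (ij : Fin l → Sym2 (Fin k)) : ℝ :=
  ∑ P ∈ Finset.univ.filter (fun P : Finset (Finset (Fin l)) => IsSetPartition P),
    (-1 : ℝ) ^ (P.card - 1) * (Nat.factorial (P.card - 1) : ℝ) * ∏ B ∈ P, xVal F B ij

/-- Isomorphism of edge-labeled multigraphs: a bijection of the vertex sets carrying
edge `p` of `F₁` to edge `p` of `F₂`. -/
def MGIso {l m₁ m₂ : ℕ} (F₁ : Fin l → Sym2 (Fin m₁)) (F₂ : Fin l → Sym2 (Fin m₂)) : Prop :=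
  ∃ φ : Fin m₁ ≃ Fin m₂, ∀ p, Sym2.map φ (F₁ p) = F₂ p

/-!
Expanding each moment `E[Π_{p ∈ B} N_p]` of the edge counts as a sum over sequences of edges,
and multiplying out over the blocks of a partition (with an independent coloring for each
block), writes the cumulant as `Σ_e κ(x_e)` over all sequences `e` of `l` edges of `G`, where
`x_e(B)` is the probability that a random coloring gives each edge `e p`, `p ∈ B`, the colors
`(i_p, j_p)`. This depends only on the isomorphism type of the multigraph spanned by `e`.
If that multigraph is disconnected, `x_e` factors across a split of the edge labels, and the
moment–cumulant recursion makes `κ(x_e)` vanish. Otherwise `e` is a copy of exactly one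
`F ∈ R`, it contributes `κ(F, J)`, and there are `i(F, G)` such sequences.
-/

open Finset

section SetPartition

variable {ι : Type*} {S : Finset ι} {P : Finset (Finset ι)}

def IsSetPartitionOf (S : Finset ι) (P : Finset (Finset ι)) : Prop :=
  (∀ B ∈ P, B ⊆ S) ∧ ∅ ∉ P ∧ ∀ i ∈ S, ∃ B ∈ P, i ∈ B ∧ ∀ B' ∈ P, i ∈ B' → B' = B

namespace IsSetPartitionOf

lemma subset (hP : IsSetPartitionOf S P) {B : Finset ι} (hB : B ∈ P) : B ⊆ S := hP.1 B hB

lemma nonempty_of_mem (hP : IsSetPartitionOf S P) {B : Finset ι} (hB : B ∈ P) : B.Nonempty :=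
  nonempty_iff_ne_empty.2 fun h => hP.2.1 (h ▸ hB)

lemma exists_mem (hP : IsSetPartitionOf S P) {i : ι} (hi : i ∈ S) : ∃ B ∈ P, i ∈ B :=
  let ⟨B, hB, hiB, _⟩ := hP.2.2 i hi
  ⟨B, hB, hiB⟩

lemma eq_of_mem (hP : IsSetPartitionOf S P) {B C : Finset ι} {i : ι} (hB : B ∈ P) (hC : C ∈ P)
    (hiB : i ∈ B) (hiC : i ∈ C) : B = C := by
  obtain ⟨D, -, -, huniq⟩ := hP.2.2 i (hP.subset hB hiB)
  rw [huniq B hB hiB, huniq C hC hiC]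

lemma of_forall (hsub : ∀ B ∈ P, B ⊆ S)
    (hne : ∀ B ∈ P, B.Nonempty) (hcov : ∀ i ∈ S, ∃ B ∈ P, i ∈ B)
    (hdisj : ∀ B ∈ P, ∀ C ∈ P, ∀ i, i ∈ B → i ∈ C → B = C) : IsSetPartitionOf S P := by
  refine ⟨hsub, fun h => (hne ∅ h).ne_empty rfl, fun i hi => ?_⟩
  obtain ⟨B, hB, hiB⟩ := hcov i hi
  exact ⟨B, hB, hiB, fun C hC hiC => hdisj C hC B hB i hiC hiB⟩

end IsSetPartitionOf

lemma isSetPartitionOf_singleton (hS : S.Nonempty) : IsSetPartitionOf S {S} :=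
  .of_forall (by simp) (by simpa using hS) (fun i hi => ⟨S, mem_singleton_self S, hi⟩)
    (by simp)

lemma IsSetPartitionOf.eq_singleton_of_card_eq_one (hP : IsSetPartitionOf S P)
    (h : P.card = 1) : P = {S} := by
  obtain ⟨C, rfl⟩ := card_eq_one.1 h
  refine congrArg _ ((hP.subset (mem_singleton_self C)).antisymm fun i hi => ?_)
  obtain ⟨B, hB, hiB⟩ := hP.exists_mem hi
  rwa [mem_singleton.1 hB] at hiB

open Classical in
noncomputable def setPartitions (S : Finset ι) : Finset (Finset (Finset ι)) :=
  S.powerset.powerset.filter (IsSetPartitionOf S)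

@[simp] lemma mem_setPartitions : P ∈ setPartitions S ↔ IsSetPartitionOf S P := by
  classical
  simp only [setPartitions, mem_filter, mem_powerset, and_iff_right_iff_imp]
  exact fun hP B hB => mem_powerset.2 (hP.subset hB)

variable [DecidableEq ι]

lemma IsSetPartitionOf.insert_sdiff {B : Finset ι} (hP : IsSetPartitionOf B P) (hBS : B ⊆ S)
    (hne : B ≠ S) : IsSetPartitionOf S (insert (S \ B) P) := by
  refine .of_forall ?_ ?_ ?_ ?_
  · simp only [forall_mem_insert]
    exact ⟨sdiff_subset, fun C hC => (hP.subset hC).trans hBS⟩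
  · simp only [forall_mem_insert, sdiff_nonempty]
    exact ⟨fun h => hne (hBS.antisymm h), fun C hC => hP.nonempty_of_mem hC⟩
  · intro i hi
    by_cases hiB : i ∈ B
    · obtain ⟨C, hC, hiC⟩ := hP.exists_mem hiB
      exact ⟨C, mem_insert_of_mem hC, hiC⟩
    · exact ⟨S \ B, mem_insert_self _ _, mem_sdiff.2 ⟨hi, hiB⟩⟩
  · have hout : ∀ C ∈ P, ∀ i, i ∈ C → i ∉ S \ B := fun C hC i hiC hi =>
      (mem_sdiff.1 hi).2 (hP.subset hC hiC)
    intro C hC D hD i hiC hiD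
    rcases mem_insert.1 hC with rfl | hC <;> rcases mem_insert.1 hD with rfl | hD
    · rfl
    · exact absurd hiC (hout D hD i hiD)
    · exact absurd hiD (hout C hC i hiC)
    · exact hP.eq_of_mem hC hD hiC hiD

lemma IsSetPartitionOf.sdiff_notMem {B : Finset ι} (hP : IsSetPartitionOf B P) :
    S \ B ∉ P := fun h => by
  obtain ⟨i, hi⟩ := hP.nonempty_of_mem h
  exact (mem_sdiff.1 hi).2 (hP.subset h hi)

lemma IsSetPartitionOf.erase {D : Finset ι} (hP : IsSetPartitionOf S P) (hD : D ∈ P) :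
    IsSetPartitionOf (S \ D) (P.erase D) := by
  refine .of_forall (fun C hC i hiC => ?_) (fun C hC => hP.nonempty_of_mem (mem_of_mem_erase hC))
    (fun i hi => ?_) (fun B hB C hC _ => hP.eq_of_mem (mem_of_mem_erase hB) (mem_of_mem_erase hC))
  · obtain ⟨hCD, hCP⟩ := mem_erase.1 hC
    exact mem_sdiff.2 ⟨hP.subset hCP hiC, fun hiD => hCD (hP.eq_of_mem hCP hD hiC hiD)⟩
  · obtain ⟨hiS, hiD⟩ := mem_sdiff.1 hi
    obtain ⟨C, hC, hiC⟩ := hP.exists_mem hiS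
    exact ⟨C, mem_erase.2 ⟨fun h => hiD (h ▸ hiC), hC⟩, hiC⟩

lemma IsSetPartitionOf.filter_notMem_eq_erase (hP : IsSetPartitionOf S P) {s₀ : ι}
    (hs₀ : s₀ ∈ S) : ∃ B₀ ∈ P, P.filter (s₀ ∉ ·) = P.erase B₀ := by
  obtain ⟨B₀, hB₀, hs₀B₀⟩ := hP.exists_mem hs₀
  refine ⟨B₀, hB₀, ext fun C => ?_⟩
  simp only [mem_filter, mem_erase]
  exact ⟨fun ⟨hC, hs₀C⟩ => ⟨fun h => hs₀C (h ▸ hs₀B₀), hC⟩,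
    fun ⟨hne, hC⟩ => ⟨hC, fun hs₀C => hne (hP.eq_of_mem hC hB₀ hs₀C hs₀B₀)⟩⟩

end SetPartition

section Cumulant

variable {ι R : Type*} [CommRing R]

/-- The Möbius function `μ(π, 1̂)` of the partition lattice, at a partition `π` with `n` blocks. -/
def partitionMobius (n : ℕ) : R := (-1) ^ (n - 1) * (n - 1).factorial

lemma partitionMobius_add_two (n : ℕ) :
    partitionMobius (n + 2) + (n + 1) * partitionMobius (n + 1) = (0 : R) := by
  simp only [partitionMobius, Nat.add_sub_cancel, show n + 2 - 1 = n + 1 by omega,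
    Nat.factorial_succ, pow_succ]
  push_cast
  ring

noncomputable def cumulant (x : Finset ι → R) (S : Finset ι) : R :=
  ∑ P ∈ setPartitions S, partitionMobius P.card * ∏ B ∈ P, x B

variable [DecidableEq ι] {x : Finset ι → R} {S : Finset ι} {s₀ : ι}

lemma IsSetPartitionOf.mobius_add_sum_erase {P : Finset (Finset ι)} (hP : IsSetPartitionOf S P)
    (hs₀ : s₀ ∈ S) :
    partitionMobius P.card * ∏ B ∈ P, x B +
        ∑ D ∈ P.filter (s₀ ∉ ·), partitionMobius (P.erase D).card * (∏ B ∈ P.erase D, x B) * x D =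
      if P = {S} then x S else 0 := by
  obtain ⟨B₀, hB₀, hfilter⟩ := hP.filter_notMem_eq_erase hs₀
  have hterm : ∀ D ∈ P.erase B₀, partitionMobius (P.erase D).card * (∏ B ∈ P.erase D, x B) * x D =
      partitionMobius (P.card - 1) * ∏ B ∈ P, x B := fun D hD => by
    have hDP := mem_of_mem_erase hD
    rw [mul_assoc, prod_erase_mul _ _ hDP, card_erase_of_mem hDP]
  rw [hfilter, sum_congr rfl hterm, sum_const, card_erase_of_mem hB₀, nsmul_eq_mul]
  obtain ⟨n, hn⟩ : ∃ n, P.card = n + 1 := Nat.exists_eq_succ_of_ne_zero (card_ne_zero_of_mem hB₀)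
  rcases n with _ | n
  · rw [if_pos (hP.eq_singleton_of_card_eq_one hn), hP.eq_singleton_of_card_eq_one hn]
    simp [partitionMobius]
  · have hne : P ≠ {S} := fun h => by simp [h] at hn
    rw [if_neg hne, hn, Nat.add_sub_cancel]
    push_cast
    linear_combination (∏ B ∈ P, x B) * partitionMobius_add_two (R := R) n

/-- Splitting off the block `S \ B` matches pairs `(B, π)` with `s₀ ∈ B ⊊ S`, `π ⊢ B` with pairs
`(P, D)` of a partition `P ⊢ S` and a block `D ∈ P` avoiding `s₀`. -/
lemma sum_cumulant_mul_sdiff_erase (hs₀ : s₀ ∈ S) :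
    ∑ B ∈ (S.powerset.filter (s₀ ∈ ·)).erase S, cumulant x B * x (S \ B) =
      ∑ P ∈ setPartitions S, ∑ D ∈ P.filter (s₀ ∉ ·),
        partitionMobius (P.erase D).card * (∏ B ∈ P.erase D, x B) * x D := by
  simp only [cumulant, sum_mul]
  rw [sum_sigma', sum_sigma']
  refine sum_nbij' (fun q => ⟨insert (S \ q.1) q.2, S \ q.1⟩) (fun q => ⟨S \ q.2, q.1.erase q.2⟩)
    ?_ ?_ ?_ ?_ ?_
  · rintro ⟨B, π⟩ h
    simp only [mem_sigma, mem_erase, mem_filter, mem_powerset, mem_setPartitions] at h ⊢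
    obtain ⟨⟨hne, hBS, hs₀B⟩, hπ⟩ := h
    exact ⟨hπ.insert_sdiff hBS hne, mem_insert_self _ _, fun h => (mem_sdiff.1 h).2 hs₀B⟩
  · rintro ⟨P, D⟩ h
    simp only [mem_sigma, mem_erase, mem_filter, mem_powerset, mem_setPartitions] at h ⊢
    obtain ⟨hP, hDP, hs₀D⟩ := h
    obtain ⟨i, hi⟩ := hP.nonempty_of_mem hDP
    exact ⟨⟨fun h => (mem_sdiff.1 (h ▸ hP.subset hDP hi)).2 hi, sdiff_subset,
      mem_sdiff.2 ⟨hs₀, hs₀D⟩⟩, hP.erase hDP⟩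
  · rintro ⟨B, π⟩ h
    simp only [mem_sigma, mem_erase, mem_filter, mem_powerset, mem_setPartitions] at h
    rw [Finset.sdiff_sdiff_eq_self h.1.2.1, erase_insert h.2.sdiff_notMem]
  · rintro ⟨P, D⟩ h
    simp only [mem_sigma, mem_filter, mem_setPartitions] at h
    rw [Finset.sdiff_sdiff_eq_self (h.1.subset h.2.1), insert_erase h.2.1]
  · rintro ⟨B, π⟩ h
    simp only [mem_sigma, mem_erase, mem_filter, mem_powerset, mem_setPartitions] at h
    simp [erase_insert h.2.sdiff_notMem, mul_assoc]

theorem sum_cumulant_mul_sdiff (hx : x ∅ = 1) (hs₀ : s₀ ∈ S) :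
    ∑ B ∈ S.powerset.filter (s₀ ∈ ·), cumulant x B * x (S \ B) = x S := by
  have hS : S ∈ S.powerset.filter (s₀ ∈ ·) := mem_filter.2 ⟨mem_powerset_self S, hs₀⟩
  rw [← add_sum_erase _ _ hS, Finset.sdiff_self, hx, mul_one, sum_cumulant_mul_sdiff_erase hs₀,
    cumulant, ← sum_add_distrib,
    sum_congr rfl fun P hP => (mem_setPartitions.1 hP).mobius_add_sum_erase hs₀,
    sum_ite_eq', if_pos (mem_setPartitions.2 (isSetPartitionOf_singleton ⟨s₀, hs₀⟩))]

/-- In the recursion for `x(S)` at `s₀ ∈ S ∩ T`, the terms with `B ⊆ T` already sum to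
`x(S ∩ T) x(S \ T) = x(S)`, and by induction all other terms vanish except `κ(S)`. -/
theorem cumulant_eq_zero_of_mul_split (hx : x ∅ = 1) (T : Finset ι)
    (hmul : ∀ A, x A = x (A ∩ T) * x (A \ T)) (S : Finset ι) (hST : (S ∩ T).Nonempty)
    (hSTc : (S \ T).Nonempty) : cumulant x S = 0 := by
  induction S using Finset.strongInduction with
  | H S ih =>
  obtain ⟨s₀, hs₀⟩ := hST
  obtain ⟨hs₀S, hs₀T⟩ := mem_inter.1 hs₀
  have hST : ¬ S ⊆ T := sdiff_nonempty.1 hSTc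
  have hinside : ∑ B ∈ (S.powerset.filter (s₀ ∈ ·)).filter (· ⊆ T), cumulant x B * x (S \ B) =
      x S := by
    have hfilter : (S.powerset.filter (s₀ ∈ ·)).filter (· ⊆ T) =
        (S ∩ T).powerset.filter (s₀ ∈ ·) := by
      ext B
      simp only [mem_filter, mem_powerset, subset_inter_iff]
      tauto
    have hsplit : ∀ B ∈ (S ∩ T).powerset.filter (s₀ ∈ ·),
        cumulant x B * x (S \ B) = cumulant x B * x ((S ∩ T) \ B) * x (S \ T) := by
      intro B hB
      have hBT := (mem_powerset.1 (mem_filter.1 hB).1).trans inter_subset_right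
      rw [mul_assoc, hmul (S \ B)]
      congr 3 <;> ext i <;> simp only [mem_inter, mem_sdiff] <;> grind
    rw [hfilter, sum_congr rfl hsplit, ← sum_mul, sum_cumulant_mul_sdiff hx hs₀, ← hmul]
  have houtside : ∑ B ∈ (S.powerset.filter (s₀ ∈ ·)).filter (¬ · ⊆ T),
      cumulant x B * x (S \ B) = cumulant x S := by
    rw [sum_eq_single_of_mem S (by simp [hs₀S, hST]), Finset.sdiff_self, hx, mul_one]
    intro B hB hBS
    simp only [mem_filter, mem_powerset] at hB
    rw [ih B (ssubset_of_subset_of_ne hB.1.1 hBS) ⟨s₀, mem_inter.2 ⟨hB.1.2, hs₀T⟩⟩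
      (sdiff_nonempty.2 hB.2), zero_mul]
  have hrec := sum_cumulant_mul_sdiff hx hs₀S
  rw [← sum_filter_add_sum_filter_not _ (· ⊆ T), hinside, houtside] at hrec
  exact left_eq_add.mp hrec.symm

end Cumulant

section MomentExpansion

variable {ι X Ω R : Type*} [Fintype ι] [DecidableEq ι] [Fintype Ω] [CommSemiring R]
  {P : Finset (Finset ι)}

lemma IsSetPartitionOf.prod_prod_eq_prod (hP : IsSetPartitionOf univ P) (b : ι → P)
    (hb : ∀ i, i ∈ (b i : Finset ι)) (f : ι → P → R) :
    ∏ B : P, ∏ i ∈ (B : Finset ι), f i B = ∏ i, f i (b i) := by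
  rw [← prod_fiberwise univ b]
  refine prod_congr rfl fun B _ => ?_
  have hfiber : univ.filter (b · = B) = (B : Finset ι) := by
    ext i
    simp only [mem_filter, mem_univ, true_and]
    exact ⟨fun h => h ▸ hb i, fun hi => Subtype.ext (hP.eq_of_mem (b i).2 B.2 (hb i) hi)⟩
  rw [← hfiber]
  exact prod_congr rfl fun i hi => by rw [(mem_filter.1 hi).2]

/-- Drawing an independent `ω` for each block turns the product over blocks into a single sum
over `P → Ω`, in which the sums over `x` can be pulled out. -/
theorem IsSetPartitionOf.prod_sum_prod_sum (hP : IsSetPartitionOf univ P) (t : Finset X)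
    (f : ι → X → Ω → R) :
    ∏ B ∈ P, ∑ ω, ∏ i ∈ B, ∑ x ∈ t, f i x ω =
      ∑ e ∈ Fintype.piFinset fun _ => t, ∏ B ∈ P, ∑ ω, ∏ i ∈ B, f i (e i) ω := by
  have hblock : ∀ i, ∃ B : P, i ∈ (B : Finset ι) := fun i =>
    let ⟨B, hB, hiB⟩ := hP.exists_mem (mem_univ i)
    ⟨⟨B, hB⟩, hiB⟩
  choose b hb using hblock
  calc ∏ B ∈ P, ∑ ω, ∏ i ∈ B, ∑ x ∈ t, f i x ω
      = ∑ c : P → Ω, ∏ B : P, ∏ i ∈ (B : Finset ι), ∑ x ∈ t, f i x (c B) := by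
        rw [← prod_coe_sort, Fintype.prod_sum]
    _ = ∑ c : P → Ω, ∑ e ∈ Fintype.piFinset fun _ => t, ∏ i, f i (e i) (c (b i)) := by
        refine sum_congr rfl fun c _ => ?_
        rw [hP.prod_prod_eq_prod b hb fun i B => ∑ x ∈ t, f i x (c B), prod_univ_sum]
    _ = ∑ e ∈ Fintype.piFinset fun _ => t, ∑ c : P → Ω, ∏ B : P, ∏ i ∈ (B : Finset ι),
          f i (e i) (c B) := by
        rw [sum_comm]
        exact sum_congr rfl fun e _ => sum_congr rfl fun c _ =>
          (hP.prod_prod_eq_prod b hb fun i B => f i (e i) (c B)).symm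
    _ = ∑ e ∈ Fintype.piFinset fun _ => t, ∏ B ∈ P, ∑ ω, ∏ i ∈ B, f i (e i) ω := by
        refine sum_congr rfl fun e _ => ?_
        rw [← prod_coe_sort P fun B => ∑ ω, ∏ i ∈ B, f i (e i) ω, Fintype.prod_sum]

end MomentExpansion

section Colorings

variable {W W' K : Type*}

lemma Function.Embedding.card_subtype_comp (φ : W ↪ W') (Φ : (W → K) → Prop) :
    Nat.card {c : W' → K // Φ (c ∘ φ)} =
      Nat.card {c : W → K // Φ c} * Nat.card ({w // w ∉ Set.range φ} → K) := by
  classical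
  have hcomp : ∀ (c : W → K) (d : {w // w ∉ Set.range φ} → K),
      (fun w => if h : w ∈ Set.range φ then c h.choose else d ⟨w, h⟩) ∘ φ = c := fun c d =>
    funext fun a => by
      simp only [Function.comp_apply, dif_pos (Set.mem_range_self a)]
      exact congrArg c (φ.injective (Set.mem_range_self a).choose_spec)
  rw [← Nat.card_prod]
  refine Nat.card_congr
    { toFun := fun c => (⟨c.1 ∘ φ, c.2⟩, fun w => c.1 w)
      invFun := fun cd => ⟨fun w => if h : w ∈ Set.range φ then cd.1.1 h.choose else cd.2 ⟨w, h⟩,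
        (hcomp cd.1.1 cd.2).symm ▸ cd.1.2⟩
      left_inv := fun c => Subtype.ext (funext fun w => ?_)
      right_inv := fun cd => Prod.ext (Subtype.ext (hcomp cd.1.1 cd.2))
        (funext fun w => dif_neg w.2) }
  by_cases h : w ∈ Set.range φ
  · simp only [dif_pos h, Function.comp_apply, h.choose_spec]
  · simp only [dif_neg h]

lemma card_subtype_and_mul_card (A : W → Prop) [DecidablePred A] {Φ Ψ : (W → K) → Prop}
    (hΦ : ∀ c c', (∀ w, A w → c w = c' w) → Φ c → Φ c')
    (hΨ : ∀ c c', (∀ w, ¬ A w → c w = c' w) → Ψ c → Ψ c') :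
    Nat.card {c // Φ c ∧ Ψ c} * Nat.card (W → K) = Nat.card {c // Φ c} * Nat.card {c // Ψ c} := by
  let mix (a b : W → K) : W → K := fun w => if A w then a w else b w
  have hin : ∀ a b w, A w → a w = mix a b w := fun a b w h => (if_pos h).symm
  have hout : ∀ a b w, ¬ A w → b w = mix a b w := fun a b w h => (if_neg h).symm
  have hmix : ∀ a b c, mix (mix a b) (mix c a) = a := fun a b c =>
    funext fun w => by by_cases h : A w <;> simp [mix, h]
  rw [← Nat.card_prod, ← Nat.card_prod]
  exact Nat.card_congr
    { toFun := fun cd => (⟨mix cd.1.1 cd.2, hΦ _ _ (hin _ _) cd.1.2.1⟩,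
        ⟨mix cd.2 cd.1.1, hΨ _ _ (hout _ _) cd.1.2.2⟩)
      invFun := fun cd => (⟨mix cd.1.1 cd.2.1, hΦ _ _ (hin _ _) cd.1.2, hΨ _ _ (hout _ _) cd.2.2⟩,
        mix cd.2.1 cd.1.1)
      left_inv := fun cd => Prod.ext (Subtype.ext (hmix _ _ _)) (hmix _ _ _)
      right_inv := fun cd => Prod.ext (Subtype.ext (hmix _ _ _)) (Subtype.ext (hmix _ _ _)) }

end Colorings

section XVal

variable {W W' : Type*} [Fintype W] [Fintype W'] {l k : ℕ} (ij : Fin l → Sym2 (Fin k))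

lemma xVal_empty (hk : 0 < k) (F : Fin l → Sym2 W) : xVal F ∅ ij = 1 := by
  simp only [xVal, notMem_empty, IsEmpty.forall_iff, implies_true]
  rw [Nat.card_congr (Equiv.subtypeUnivEquiv fun _ => trivial)]
  simp [Nat.card_fun, hk.ne']

lemma xVal_map_embedding (hk : 0 < k) (φ : W ↪ W') (F : Fin l → Sym2 W) (S : Finset (Fin l)) :
    xVal (fun p => Sym2.map φ (F p)) S ij = xVal F S ij := by
  have hconstr := φ.card_subtype_comp fun c : W → Fin k => ∀ p ∈ S, Sym2.map c (F p) = ij p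
  have htotal := φ.card_subtype_comp fun _ : W → Fin k => True
  rw [Nat.card_subtype_true, Nat.card_subtype_true] at htotal
  have hW : Nat.card (W → Fin k) = k ^ Fintype.card W := by simp [Nat.card_fun]
  have hW' : Nat.card (W' → Fin k) = k ^ Fintype.card W' := by simp [Nat.card_fun]
  have hfree : (Nat.card ({w // w ∉ Set.range φ} → Fin k) : ℝ) ≠ 0 := by
    have : Nonempty (Fin k) := ⟨⟨0, hk⟩⟩
    exact_mod_cast Nat.card_pos.ne'
  simp only [xVal, Sym2.map_map]
  rw [hconstr, ← Nat.cast_pow, ← Nat.cast_pow, ← hW, ← hW', htotal, Nat.cast_mul, Nat.cast_mul]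
  exact mul_div_mul_right _ _ hfree

lemma xVal_eq_mul_of_disjoint (hk : 0 < k) (F : Fin l → Sym2 W) {T : Finset (Fin l)}
    (hT : ∀ p ∈ T, ∀ q ∉ T, ∀ v ∈ F p, v ∉ F q) (S : Finset (Fin l)) :
    xVal F S ij = xVal F (S ∩ T) ij * xVal F (S \ T) ij := by
  classical
  let A : W → Prop := fun v => ∃ p ∈ T, v ∈ F p
  have hcard := card_subtype_and_mul_card A
    (Φ := fun c : W → Fin k => ∀ p ∈ S ∩ T, Sym2.map c (F p) = ij p)
    (Ψ := fun c : W → Fin k => ∀ p ∈ S \ T, Sym2.map c (F p) = ij p)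
    (fun c c' h hc p hp => by
      rw [← hc p hp]
      exact Sym2.map_congr fun v hv => (h v ⟨p, (mem_inter.1 hp).2, hv⟩).symm)
    (fun c c' h hc p hp => by
      rw [← hc p hp]
      refine Sym2.map_congr fun v hv => (h v ?_).symm
      rintro ⟨q, hq, hvq⟩
      exact hT q hq p (mem_sdiff.1 hp).2 v hvq hv)
  have hsplit : ∀ c : W → Fin k, ((∀ p ∈ S ∩ T, Sym2.map c (F p) = ij p) ∧
      ∀ p ∈ S \ T, Sym2.map c (F p) = ij p) ↔ ∀ p ∈ S, Sym2.map c (F p) = ij p := fun c => by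
    simp only [mem_inter, mem_sdiff]
    exact ⟨fun h p hp => (em (p ∈ T)).elim (fun hpT => h.1 p ⟨hp, hpT⟩) fun hpT => h.2 p ⟨hp, hpT⟩,
      fun h => ⟨fun p hp => h p hp.1, fun p hp => h p hp.1⟩⟩
  have hW : Nat.card (W → Fin k) = k ^ Fintype.card W := by simp
  rw [Nat.card_congr (Equiv.subtypeEquivRight hsplit), hW] at hcard
  simp only [xVal]
  rw [div_mul_div_comm, eq_div_iff (by positivity), ← pow_add, ← two_mul, pow_mul', sq, ← mul_assoc,
    div_mul_cancel₀ _ (by positivity)]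
  exact_mod_cast hcard

lemma xVal_eq_sum [DecidableEq W] (F : Fin l → Sym2 W) (S : Finset (Fin l)) :
    xVal F S ij = (∑ c : W → Fin k, ∏ p ∈ S, if Sym2.map c (F p) = ij p then 1 else 0) /
      (k : ℝ) ^ Fintype.card W := by
  rw [xVal, Nat.card_eq_fintype_card, Fintype.card_subtype, card_filter]
  push_cast
  simp only [prod_boole]
  congr!

end XVal

section Copies

variable {V W : Type*} {l : ℕ}

def IsCopyOf (e : Fin l → Sym2 V) (F : Fin l → Sym2 W) : Prop :=
  ∃ φ : W ↪ V, ∀ p, e p = Sym2.map φ (F p)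

lemma IsCopyOf.range_eq {e : Fin l → Sym2 V} {F : Fin l → Sym2 W} {φ : W ↪ V}
    (hφ : ∀ p, e p = Sym2.map φ (F p)) (hF : ∀ w, ∃ p, w ∈ F p) :
    Set.range φ = {v | ∃ p, v ∈ e p} := by
  ext v
  refine ⟨?_, fun ⟨p, hp⟩ => ?_⟩
  · rintro ⟨w, rfl⟩
    obtain ⟨p, hp⟩ := hF w
    exact ⟨p, hφ p ▸ Sym2.mem_map.2 ⟨w, hp, rfl⟩⟩
  · obtain ⟨w, -, rfl⟩ := Sym2.mem_map.1 (hφ p ▸ hp)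
    exact Set.mem_range_self w

lemma IsCopyOf.mgIso {m₁ m₂ : ℕ} {e : Fin l → Sym2 V} {F₁ : Fin l → Sym2 (Fin m₁)}
    {F₂ : Fin l → Sym2 (Fin m₂)} (h₁ : IsCopyOf e F₁) (h₂ : IsCopyOf e F₂)
    (hF₁ : ∀ w, ∃ p, w ∈ F₁ p) (hF₂ : ∀ w, ∃ p, w ∈ F₂ p) : MGIso F₁ F₂ := by
  obtain ⟨φ₁, hφ₁⟩ := h₁
  obtain ⟨φ₂, hφ₂⟩ := h₂
  let ψ : Fin m₁ ≃ Fin m₂ := (Equiv.ofInjective φ₁ φ₁.injective).trans <|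
    (Equiv.setCongr ((IsCopyOf.range_eq hφ₁ hF₁).trans (IsCopyOf.range_eq hφ₂ hF₂).symm)).trans
      (Equiv.ofInjective φ₂ φ₂.injective).symm
  have hψ : φ₂ ∘ ψ = φ₁ := funext fun w => Equiv.apply_ofInjective_symm φ₂.injective _
  refine ⟨ψ, fun p => Sym2.map.injective φ₂.injective ?_⟩
  rw [Sym2.map_map, hψ, ← hφ₁, ← hφ₂]

lemma IsCopyOf.of_mgIso {m₁ m₂ : ℕ} {e : Fin l → Sym2 V} {F₁ : Fin l → Sym2 (Fin m₁)}
    {F₂ : Fin l → Sym2 (Fin m₂)} (h : IsCopyOf e F₁) (hiso : MGIso F₁ F₂) : IsCopyOf e F₂ := by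
  obtain ⟨φ, hφ⟩ := h
  obtain ⟨ψ, hψ⟩ := hiso
  refine ⟨ψ.symm.toEmbedding.trans φ, fun p => ?_⟩
  rw [hφ, ← hψ, Sym2.map_map]
  exact Sym2.map_congr fun w _ => by simp

lemma mgIso_refl {m : ℕ} (F : Fin l → Sym2 (Fin m)) : MGIso F F :=
  ⟨Equiv.refl _, fun p => by simp⟩

lemma exists_isCopyOf [Finite V] (e : Fin l → Sym2 V) :
    ∃ (m : ℕ) (F : Fin l → Sym2 (Fin m)), IsCopyOf e F ∧ ∀ w, ∃ p, w ∈ F p := by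
  obtain ⟨m, ⟨ψ⟩⟩ := Finite.exists_equiv_fin {v // ∃ p, v ∈ e p}
  let lift (p : Fin l) : Sym2 {v // ∃ p, v ∈ e p} := (e p).attachWith fun _ hv => ⟨p, hv⟩
  have hlift : ∀ p, Sym2.map Subtype.val (lift p) = e p := fun p =>
    Sym2.attachWith_map_subtypeVal _
  refine ⟨m, fun p => Sym2.map ψ (lift p),
    ⟨ψ.symm.toEmbedding.trans (Function.Embedding.subtype _), fun p => ?_⟩, fun w => ?_⟩
  · rw [Sym2.map_map, ← hlift p]
    exact Sym2.map_congr fun v _ => by simp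
  · obtain ⟨p, hp⟩ := (ψ.symm w).2
    obtain ⟨u, hu, huw⟩ := Sym2.mem_map.1 ((hlift p).symm ▸ hp)
    exact ⟨p, Sym2.mem_map.2 ⟨u, hu, by rw [Subtype.ext huw, Equiv.apply_symm_apply]⟩⟩

end Copies

section Connectivity

variable {W : Type*} {l : ℕ}

lemma reachable_fromEdgeSet_of_mem {s : Set (Sym2 W)} {z : Sym2 W} (hz : z ∈ s) {v w : W}
    (hv : v ∈ z) (hw : w ∈ z) : (SimpleGraph.fromEdgeSet s).Reachable v w := by
  rcases eq_or_ne v w with rfl | hne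
  · rfl
  · refine SimpleGraph.Adj.reachable ((SimpleGraph.fromEdgeSet_adj s).2 ⟨?_, hne⟩)
    rwa [← (Sym2.mem_and_mem_iff hne).1 ⟨hv, hw⟩]

/-- `T` is the set of edges reachable from a vertex `u`; an edge at a vertex not reachable from
`u` lies outside `T`. -/
lemma exists_split_of_not_preconnected (F : Fin l → Sym2 W) (hF : ∀ w, ∃ p, w ∈ F p)
    (hconn : ¬ (SimpleGraph.fromEdgeSet (Set.range F)).Preconnected) :
    ∃ T : Finset (Fin l), T.Nonempty ∧ (univ \ T).Nonempty ∧
      ∀ p ∈ T, ∀ q ∉ T, ∀ v ∈ F p, v ∉ F q := by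
  classical
  obtain ⟨u, w, huw⟩ : ∃ u w, ¬ (SimpleGraph.fromEdgeSet (Set.range F)).Reachable u w := by
    simpa [SimpleGraph.Preconnected] using hconn
  refine ⟨univ.filter fun p => ∃ v ∈ F p, (SimpleGraph.fromEdgeSet (Set.range F)).Reachable u v,
    ?_, ?_, fun p hp q hq v hvp hvq => hq ?_⟩
  · obtain ⟨p, hp⟩ := hF u
    exact ⟨p, mem_filter.2 ⟨mem_univ _, u, hp, .refl u⟩⟩
  · obtain ⟨q, hq⟩ := hF w
    refine ⟨q, mem_sdiff.2 ⟨mem_univ _, fun hq' => ?_⟩⟩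
    obtain ⟨v, hv, huv⟩ := (mem_filter.1 hq').2
    exact huw (huv.trans (reachable_fromEdgeSet_of_mem (Set.mem_range_self q) hv hq))
  · obtain ⟨v', hv', huv'⟩ := (mem_filter.1 hp).2
    exact mem_filter.2 ⟨mem_univ _, v, hvq,
      huv'.trans (reachable_fromEdgeSet_of_mem (Set.mem_range_self p) hv' hvp)⟩

lemma cumulant_xVal_eq_zero_of_not_preconnected [Fintype W] {k : ℕ} (ij : Fin l → Sym2 (Fin k))
    (hk : 0 < k) (F : Fin l → Sym2 W) (hF : ∀ w, ∃ p, w ∈ F p)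
    (hconn : ¬ (SimpleGraph.fromEdgeSet (Set.range F)).Preconnected) :
    cumulant (fun S => xVal F S ij) univ = 0 := by
  obtain ⟨T, hT, hTc, hdisj⟩ := exists_split_of_not_preconnected F hF hconn
  exact cumulant_eq_zero_of_mul_split (xVal_empty ij hk F) T
    (xVal_eq_mul_of_disjoint ij hk F hdisj) univ (by rwa [univ_inter]) hTc

end Connectivity

section Graph

variable {V : Type*} [Fintype V] {l k : ℕ}

open Classical in
lemma filter_isSetPartition_eq :
    univ.filter (IsSetPartition (l := l)) = setPartitions (univ : Finset (Fin l)) := by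
  ext P
  simp [IsSetPartition, IsSetPartitionOf]

lemma kappaFJ_eq_cumulant {m : ℕ} (F : Fin l → Sym2 (Fin m)) (ij : Fin l → Sym2 (Fin k)) :
    kappaFJ F ij = cumulant (fun S => xVal F S ij) univ := by
  rw [kappaFJ, filter_isSetPartition_eq]
  rfl

lemma jointCumulantColor_eq_cumulant (Z : Fin l → (V → Fin k) → ℝ) :
    jointCumulantColor k Z = cumulant (fun B => colorExp k fun C => ∏ p ∈ B, Z p C) univ := by
  rw [jointCumulantColor, filter_isSetPartition_eq]
  rfl

lemma eCount_eq_sum [DecidableEq V] (G : SimpleGraph V) [DecidableRel G.Adj] (C : V → Fin k)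
    (i j : Fin k) :
    (eCount G C i j : ℝ) = ∑ x ∈ G.edgeFinset, if Sym2.map C x = s(i, j) then 1 else 0 := by
  rw [sum_boole, eCount]
  congr 2
  ext x
  simp

lemma prod_colorExp_eCount [DecidableEq V] (G : SimpleGraph V) [DecidableRel G.Adj]
    (ij : Fin l → Fin k × Fin k) {P : Finset (Finset (Fin l))} (hP : IsSetPartitionOf univ P) :
    ∏ B ∈ P, colorExp k (fun C => ∏ p ∈ B, (eCount G C (ij p).1 (ij p).2 : ℝ)) =
      ∑ e ∈ Fintype.piFinset fun _ => G.edgeFinset,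
        ∏ B ∈ P, xVal e B fun p => s((ij p).1, (ij p).2) := by
  simp only [colorExp, xVal_eq_sum, eCount_eq_sum, prod_div_distrib, ← sum_div,
    hP.prod_sum_prod_sum]
  congr!

lemma jointCumulantColor_eCount [DecidableEq V] [Nonempty V] (G : SimpleGraph V)
    [DecidableRel G.Adj] (ij : Fin l → Fin k × Fin k) :
    jointCumulantColor k (fun p (C : V → Fin k) =>
        (Fintype.card V : ℝ) * ((eCount G C (ij p).1 (ij p).2 : ℝ) / (Fintype.card V : ℝ))) =
      ∑ e ∈ Fintype.piFinset fun _ => G.edgeFinset,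
        cumulant (fun B => xVal e B fun p => s((ij p).1, (ij p).2)) univ := by
  have hV : (Fintype.card V : ℝ) ≠ 0 := Nat.cast_ne_zero.2 Fintype.card_ne_zero
  simp only [mul_div_cancel₀ _ hV, jointCumulantColor_eq_cumulant, cumulant]
  rw [sum_comm]
  exact sum_congr rfl fun P hP => by
    rw [prod_colorExp_eCount G ij (mem_setPartitions.1 hP), mul_sum]

open Classical in
lemma cumulant_xVal_eq_sum_ite (hk : 0 < k) (hl : 0 < l) (ij : Fin l → Sym2 (Fin k))
    (R : Finset (Σ m : Fin (2 * l + 1), Fin l → Sym2 (Fin (m : ℕ))))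
    (hgood : ∀ F ∈ R, GoodMG F.2)
    (htrans : ∀ (m : ℕ) (F : Fin l → Sym2 (Fin m)), GoodMG F →
      ∃! F₀, F₀ ∈ R ∧ MGIso F F₀.2)
    (e : Fin l → Sym2 V) (he : ∀ p, ¬ (e p).IsDiag) :
    cumulant (fun S => xVal e S ij) univ =
      ∑ F ∈ R, if IsCopyOf e F.2 then kappaFJ F.2 ij else 0 := by
  have hxVal : ∀ {W : Type} [Fintype W] {F : Fin l → Sym2 W}, IsCopyOf e F →
      cumulant (fun S => xVal e S ij) univ = cumulant (fun S => xVal F S ij) univ := by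
    rintro W _ F ⟨φ, hφ⟩
    obtain rfl : e = fun p => Sym2.map φ (F p) := funext hφ
    simp only [xVal_map_embedding ij hk]
  by_cases hcopy : ∃ F ∈ R, IsCopyOf e F.2
  · obtain ⟨F₀, hF₀R, hF₀⟩ := hcopy
    rw [sum_eq_single_of_mem F₀ hF₀R, if_pos hF₀, hxVal hF₀, kappaFJ_eq_cumulant]
    intro F hFR hne
    refine if_neg fun hF => hne ?_
    have hiso := hF₀.mgIso hF (hgood F₀ hF₀R).1 (hgood F hFR).1
    exact (htrans _ F₀.2 (hgood F₀ hF₀R)).unique ⟨hFR, hiso⟩ ⟨hF₀R, mgIso_refl _⟩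
  · push Not at hcopy
    rw [sum_eq_zero fun F hF => if_neg (hcopy F hF)]
    obtain ⟨m, F, hF, hFiso⟩ := exists_isCopyOf e
    have hnotGood : ¬ GoodMG F := fun hgoodF => by
      obtain ⟨F₀, ⟨hF₀R, hiso⟩, -⟩ := htrans m F hgoodF
      exact hcopy F₀ hF₀R (hF.of_mgIso hiso)
    have hnoLoop : ∀ p, ¬ (F p).IsDiag := by
      obtain ⟨φ, hφ⟩ := hF
      exact fun p => (Sym2.isDiag_map φ.injective).not.1 (hφ p ▸ he p)
    have : Nonempty (Fin m) := (F ⟨0, hl⟩).inductionOn fun v _ => ⟨v⟩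
    rw [hxVal hF, cumulant_xVal_eq_zero_of_not_preconnected ij hk F hFiso fun hpre =>
      hnotGood ⟨hFiso, hnoLoop, ⟨hpre⟩⟩]

open Classical in
lemma iCount_eq_card {m : ℕ} (F : Fin l → Sym2 (Fin m))
    (G : SimpleGraph V) [DecidableRel G.Adj] :
    iCount F G = #((Fintype.piFinset fun _ => G.edgeFinset).filter (IsCopyOf · F)) := by
  rw [iCount, Nat.card_eq_fintype_card, Fintype.card_subtype]
  congr 1
  ext e
  rw [mem_filter, mem_filter, Fintype.mem_piFinset]
  simp [IsCopyOf]

end Graph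

/-- The sum over `𝓕_l` is a sum over a transversal `R` of its isomorphism classes, realized on
vertex sets `Fin m`, `m ≤ 2l`. -/
theorem cumulant_eq_sum_counts
    (V : Type*) [Fintype V] (hV : Nonempty V) (G : SimpleGraph V)
    (k l : ℕ) (hk : 0 < k) (hl : 0 < l)
    (ij : Fin l → Fin k × Fin k)
    (R : Finset (Σ m : Fin (2 * l + 1), Fin l → Sym2 (Fin (m : ℕ))))
    (hgood : ∀ F ∈ R, GoodMG F.2)
    (htrans : ∀ (m : ℕ) (F : Fin l → Sym2 (Fin m)), GoodMG F →
      ∃! F₀, F₀ ∈ R ∧ MGIso F F₀.2) :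
    jointCumulantColor k (fun p (C : V → Fin k) =>
        (Fintype.card V : ℝ) *
          ((eCount G C (ij p).1 (ij p).2 : ℝ) / (Fintype.card V : ℝ))) =
      ∑ F ∈ R, (iCount F.2 G : ℝ) * kappaFJ F.2 (fun p => s((ij p).1, (ij p).2)) := by
  classical
  rw [jointCumulantColor_eCount G ij]
  calc ∑ e ∈ Fintype.piFinset fun _ => G.edgeFinset,
        cumulant (fun B => xVal e B fun p => s((ij p).1, (ij p).2)) univ
      = ∑ e ∈ Fintype.piFinset fun _ => G.edgeFinset, ∑ F ∈ R,
          if IsCopyOf e F.2 then kappaFJ F.2 (fun p => s((ij p).1, (ij p).2)) else 0 :=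
        sum_congr rfl fun e he => cumulant_xVal_eq_sum_ite hk hl _ R hgood htrans e fun p =>
          G.not_isDiag_of_mem_edgeSet (SimpleGraph.mem_edgeFinset.1 (Fintype.mem_piFinset.1 he p))
    _ = _ := by
        rw [sum_comm]
        refine sum_congr rfl fun F _ => ?_
        rw [← sum_filter, sum_const, nsmul_eq_mul, iCount_eq_card]
end

section
/- Let l be a positive integer and k ≥ 2l. Let E be the square matrix with rows and columns indexed by 𝓕*_l whose entry in column F and row J is x(F,J), where x(F,J) = E[∏_{p=1}^l Y_{i_p,j_p,f_p}] is computed by realizing J as a multigraph on [k] with edges (i_1,j_1),…,(i_l,j_l), taking a uniformly random coloring of V(F) by [k], letting f_1,…,f_l be the labeled edges of F, and letting Y_{i,j,e} be the indicator that the endpoints of e receive colors i and j. Then the matrix E is invertible; in particular, under any ordering of 𝓕*_l by a nondecreasing number of non-isolated vertices, E has nonzero diagonal entries and zero entries above the diagonal. -/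
/-- `F : Fin l → Sym2 (Fin m)` represents a multigraph with `l` labeled edges on the
vertex set `Fin m`. `GoodMGStar F` says that it is a member of `𝓕*_l`: no isolated
vertices and no loops (connectivity is not required). -/
def GoodMGStar {l m : ℕ} (F : Fin l → Sym2 (Fin m)) : Prop :=
  (∀ v : Fin m, ∃ p, v ∈ F p) ∧ (∀ p, ¬ (F p).IsDiag)

/-- The matrix with rows indexed by `J` and columns indexed by `F` (both running over
a transversal `R` of `𝓕*_l`) whose `(J, F)` entry is `x(F, J)`, where `J` is realized
as a multigraph on `[k]` via the injection `ψ J`. -/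
noncomputable def xMatrix {l : ℕ} (k : ℕ)
    (R : Finset (Σ m : Fin (2 * l + 1), Fin l → Sym2 (Fin (m : ℕ))))
    (ψ : ∀ F : (Σ m : Fin (2 * l + 1), Fin l → Sym2 (Fin (m : ℕ))),
      Fin (F.1 : ℕ) ↪ Fin k) :
    Matrix ↥R ↥R ℝ :=
  fun J F => xVal F.1.2 Finset.univ (fun p => Sym2.map (ψ J.1) (J.1.2 p))

theorem Matrix.det_ne_zero_of_triangular_wrt {ι α R : Type*} [Fintype ι] [DecidableEq ι]
    [LinearOrder α] [CommRing R] [IsDomain R] (M : Matrix ι ι R) (b : ι → α)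
    (hM : ∀ i j, i ≠ j → b j ≤ b i → M i j = 0) (hdiag : ∀ i, M i i ≠ 0) :
    M.det ≠ 0 := by
  let key : ι → α ×ₗ Fin (Fintype.card ι) := fun i => toLex (b i, Fintype.equivFin ι i)
  have hkey : Function.Injective key := fun i j h =>
    (Fintype.equivFin ι).injective (congrArg (fun x => (ofLex x).2) h)
  let : LinearOrder ι := LinearOrder.lift' key hkey
  rw [det_of_isUpperTriangular fun i j hji => hM i j hji.ne' (Prod.Lex.monotone_fst _ _ hji.le)]
  exact Finset.prod_ne_zero_iff.2 fun i _ => hdiag i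

lemma xVal_ne_zero_iff {W : Type*} [Fintype W] {l k : ℕ} (F : Fin l → Sym2 W)
    (S : Finset (Fin l)) (ij : Fin l → Sym2 (Fin k)) :
    xVal F S ij ≠ 0 ↔ ∃ c : W → Fin k, ∀ p ∈ S, (F p).map c = ij p := by
  classical
  rw [xVal, div_ne_zero_iff, Nat.cast_ne_zero, Nat.card_ne_zero]
  constructor
  · rintro ⟨⟨⟨⟨c, hc⟩⟩, _⟩, _⟩
    exact ⟨c, hc⟩
  · rintro ⟨c, hc⟩
    have : Nonempty (W → Fin k) := ⟨c⟩
    have hcard : Fintype.card (W → Fin k) ≠ 0 := Fintype.card_ne_zero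
    rw [Fintype.card_fun, Fintype.card_fin] at hcard
    exact ⟨⟨⟨⟨c, hc⟩⟩, inferInstance⟩, by exact_mod_cast hcard⟩

lemma exists_injective_comp_eq_of_forall_sym2_map_eq {ι V W K : Type*}
    {F : ι → Sym2 W} {J : ι → Sym2 V}
    (hJ : ∀ v, ∃ p, v ∈ J p) {c : W → K} {ψ : V → K} (hψ : ψ.Injective)
    (hc : ∀ p, (F p).map c = (J p).map ψ) :
    ∃ g : V → W, g.Injective ∧ c ∘ g = ψ := by
  have hcover : ∀ v, ∃ w, c w = ψ v := fun v => by
    obtain ⟨p, hp⟩ := hJ v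
    obtain ⟨w, -, hw⟩ := Sym2.mem_map.1 (hc p ▸ Sym2.mem_map.2 ⟨v, hp, rfl⟩)
    exact ⟨w, hw⟩
  choose g hg using hcover
  exact ⟨g, fun a b hab => hψ (by rw [← hg a, ← hg b, hab]), funext hg⟩

section ColoringRealizing

variable {l m₁ m₂ k : ℕ} {F : Fin l → Sym2 (Fin m₁)} {J : Fin l → Sym2 (Fin m₂)}
  {c : Fin m₁ → Fin k} {ψ : Fin m₂ ↪ Fin k}

lemma le_of_forall_sym2_map_eq (hJ : ∀ v, ∃ p, v ∈ J p)
    (hc : ∀ p, (F p).map c = (J p).map ψ) : m₂ ≤ m₁ := by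
  obtain ⟨g, hg, -⟩ := exists_injective_comp_eq_of_forall_sym2_map_eq hJ ψ.injective hc
  simpa using Fintype.card_le_of_injective g hg

lemma mgIso_of_forall_sym2_map_eq (hJ : ∀ v, ∃ p, v ∈ J p)
    (hc : ∀ p, (F p).map c = (J p).map ψ) (hm : m₁ ≤ m₂) : MGIso F J := by
  obtain ⟨g, hg, hcg⟩ := exists_injective_comp_eq_of_forall_sym2_map_eq hJ ψ.injective hc
  have hcard : m₂ = m₁ := le_antisymm (le_of_forall_sym2_map_eq hJ hc) hm
  have hbij : g.Bijective :=
    (Fintype.bijective_iff_injective_and_card g).2 ⟨hg, by simp [hcard]⟩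
  have hψe : ψ ∘ (Equiv.ofBijective g hbij).symm = c := funext fun w => by
    rw [← hcg]
    exact congrArg c (Equiv.ofBijective_apply_symm_apply g hbij w)
  refine ⟨(Equiv.ofBijective g hbij).symm, fun p => Sym2.map.injective ψ.injective ?_⟩
  rw [Sym2.map_map, hψe, hc p]

end ColoringRealizing

theorem xMatrix_invertible_general
    (l k : ℕ)
    (R : Finset (Σ m : Fin (2 * l + 1), Fin l → Sym2 (Fin (m : ℕ))))
    (hgood : ∀ F ∈ R, GoodMGStar F.2)
    (htrans : ∀ (m : ℕ) (F : Fin l → Sym2 (Fin m)), GoodMGStar F →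
      ∃! F₀, F₀ ∈ R ∧ MGIso F F₀.2)
    (ψ : ∀ F : (Σ m : Fin (2 * l + 1), Fin l → Sym2 (Fin (m : ℕ))),
      Fin (F.1 : ℕ) ↪ Fin k) :
    IsUnit (xMatrix k R ψ).det ∧
    (∀ J F : ↥R, ((F.1.1 : ℕ) < (J.1.1 : ℕ) ∨
        ((F.1.1 : ℕ) = (J.1.1 : ℕ) ∧ ¬ MGIso F.1.2 J.1.2)) →
      xMatrix k R ψ J F = 0) ∧
    (∀ F : ↥R, xMatrix k R ψ F F ≠ 0) := by
  have hzero : ∀ J F : ↥R, ((F.1.1 : ℕ) < (J.1.1 : ℕ) ∨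
      ((F.1.1 : ℕ) = (J.1.1 : ℕ) ∧ ¬ MGIso F.1.2 J.1.2)) → xMatrix k R ψ J F = 0 := by
    intro J F h
    by_contra hne
    obtain ⟨c, hc⟩ := (xVal_ne_zero_iff _ _ _).1 hne
    have hJ := (hgood J.1 J.2).1
    replace hc : ∀ p, (F.1.2 p).map c = (J.1.2 p).map (ψ J.1) :=
      fun p => hc p (Finset.mem_univ p)
    rcases h with hlt | ⟨heq, hiso⟩
    · exact (le_of_forall_sym2_map_eq hJ hc).not_gt hlt
    · exact hiso (mgIso_of_forall_sym2_map_eq hJ hc heq.le)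
  have hdiag : ∀ F : ↥R, xMatrix k R ψ F F ≠ 0 := fun F =>
    (xVal_ne_zero_iff _ _ _).2 ⟨ψ F.1, fun _ _ => rfl⟩
  have hunique : ∀ F J : ↥R, MGIso F.1.2 J.1.2 → F = J := fun F J hiso => by
    obtain ⟨F₀, -, huniq⟩ := htrans _ F.1.2 (hgood F.1 F.2)
    exact Subtype.ext ((huniq F.1 ⟨F.2, Equiv.refl _, fun p => by simp⟩).trans
      (huniq J.1 ⟨J.2, hiso⟩).symm)
  refine ⟨isUnit_iff_ne_zero.2 ?_, hzero, hdiag⟩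
  refine Matrix.det_ne_zero_of_triangular_wrt _ (fun F : ↥R => (F.1.1 : ℕ))
    (fun J F hne hle => hzero J F ?_) hdiag
  exact hle.lt_or_eq.imp_right fun heq => ⟨heq, fun hiso => hne (hunique F J hiso).symm⟩

/-- for `k ≥ 2l`, the matrix `E = (x(F, J))_{J, F ∈ 𝓕*_l}` is
invertible; in particular (which is the reason for invertibility) its entries vanish
whenever `J` has more (non-isolated) vertices than `F`, or both have the same number
of vertices but are not isomorphic, while its diagonal entries are nonzero — i.e. it
is triangular with nonzero diagonal under any ordering of `𝓕*_l` by a nondecreasing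
number of non-isolated vertices.  The isomorphism classes `𝓕*_l` are represented by an
arbitrary transversal `R` of representatives on vertex sets `Fin m`, `m ≤ 2l`. -/
theorem xMatrix_invertible
    (l k : ℕ) (hl : 0 < l) (hk : 2 * l ≤ k)
    (R : Finset (Σ m : Fin (2 * l + 1), Fin l → Sym2 (Fin (m : ℕ))))
    (hgood : ∀ F ∈ R, GoodMGStar F.2)
    (htrans : ∀ (m : ℕ) (F : Fin l → Sym2 (Fin m)), GoodMGStar F →
      ∃! F₀, F₀ ∈ R ∧ MGIso F F₀.2)
    (ψ : ∀ F : (Σ m : Fin (2 * l + 1), Fin l → Sym2 (Fin (m : ℕ))),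
      Fin (F.1 : ℕ) ↪ Fin k) :
    IsUnit (xMatrix k R ψ).det ∧
    (∀ J F : ↥R, ((F.1.1 : ℕ) < (J.1.1 : ℕ) ∨
        ((F.1.1 : ℕ) = (J.1.1 : ℕ) ∧ ¬ MGIso F.1.2 J.1.2)) →
      xMatrix k R ψ J F = 0) ∧
    (∀ F : ↥R, xMatrix k R ψ F F ≠ 0) :=
  xMatrix_invertible_general l k R hgood htrans ψ
end
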